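/- Let (g, [·,·], α) be a regular hom-Lie algebra and N: g → g a hom-Nijenhuis operator commuting with α. Then the bracket ω(u,v) = [u,v]_N := [Nu,v] + [u,Nv] − N[u,v] satisfies the hom-Jacobi-type identity ω(α(u), ω(v,w)) + ω(α(v), ω(w,u)) + ω(α(w), ω(u,v)) = 0, so that ω generates a deformation [u,v]_t = [u,v] + tω(u,v) of the hom-Lie algebra. -/
import Mathlib


/-- A regular hom-Lie algebra: a real vector space with a skew-symmetric bilinear
bracket and a linear automorphism `e` (the structure map `α`) satisfying the
hom-Jacobi identity, with `e` an algebra automorphism. -/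
structure RegularHomLieAlgebra (g : Type*) [AddCommGroup g] [Module ℝ g] where
  bracket : g →ₗ[ℝ] g →ₗ[ℝ] g
  e : g ≃ₗ[ℝ] g
  skew : ∀ u v, bracket u v = - bracket v u
  jacobi : ∀ u v w,
    bracket (e u) (bracket v w) + bracket (e v) (bracket w u)
      + bracket (e w) (bracket u v) = 0
  mult : ∀ u v, e (bracket u v) = bracket (e u) (e v)

/-- The deformed bracket `[u,v]_N = [Nu,v] + [u,Nv] − N[u,v]`. -/
def nijBracket {g : Type*} [AddCommGroup g] [Module ℝ g]
    (L : RegularHomLieAlgebra g) (N : g →ₗ[ℝ] g) (u v : g) : g :=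
  L.bracket (N u) v + L.bracket u (N v) - N (L.bracket u v)

lemma nij_key {g : Type*} [AddCommGroup g] [Module ℝ g]
    (L : RegularHomLieAlgebra g) (N : g →ₗ[ℝ] g)
    (hcomm : ∀ u, N (L.e u) = L.e (N u))
    (hN : ∀ u v, L.bracket (N u) (N v) = N (nijBracket L N u v))
    (u v w : g) :
    nijBracket L N (L.e u) (nijBracket L N v w)
      = L.bracket (L.e (N u)) (L.bracket (N v) w)
        + L.bracket (L.e (N u)) (L.bracket v (N w))
        + L.bracket (L.e u) (L.bracket (N v) (N w))
        - N (L.bracket (L.e (N u)) (L.bracket v w))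
        - N (L.bracket (L.e u) (L.bracket (N v) w))
        - N (L.bracket (L.e u) (L.bracket v (N w)))
        + N (N (L.bracket (L.e u) (L.bracket v w))) := by
  rw [show nijBracket L N (L.e u) (nijBracket L N v w)
      = L.bracket (N (L.e u)) (nijBracket L N v w)
        + L.bracket (L.e u) (N (nijBracket L N v w))
        - N (L.bracket (L.e u) (nijBracket L N v w)) from rfl]
  rw [← hN v w]
  simp only [nijBracket, map_add, map_sub, LinearMap.add_apply, LinearMap.sub_apply]
  rw [hN (L.e u) (L.bracket v w)]
  simp only [nijBracket, map_add, map_sub, LinearMap.add_apply, LinearMap.sub_apply, hcomm]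
  abel

/-- If `N` is a hom-Nijenhuis operator (commuting with `α`), then
`ω(u,v) = [u,v]_N` satisfies the hom-Jacobi identity, so `ω` generates a deformation
of the regular hom-Lie algebra. -/
theorem nijenhuis_generates_deformation {g : Type*} [AddCommGroup g] [Module ℝ g]
    (L : RegularHomLieAlgebra g) (N : g →ₗ[ℝ] g)
    (hcomm : ∀ u, N (L.e u) = L.e (N u))
    (hN : ∀ u v, L.bracket (N u) (N v) = N (nijBracket L N u v)) :
    ∀ u v w : g,
      nijBracket L N (L.e u) (nijBracket L N v w)
        + nijBracket L N (L.e v) (nijBracket L N w u)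
        + nijBracket L N (L.e w) (nijBracket L N u v) = 0 := by
  intro u v w
  rw [nij_key L N hcomm hN u v w, nij_key L N hcomm hN v w u, nij_key L N hcomm hN w u v]
  have h4 : N (L.bracket (L.e (N u)) (L.bracket v w))
      + N (L.bracket (L.e v) (L.bracket w (N u)))
      + N (L.bracket (L.e w) (L.bracket (N u) v)) = 0 := by
    simpa [map_add] using congrArg N (L.jacobi (N u) v w)
  have h5 : N (L.bracket (L.e u) (L.bracket (N v) w))
      + N (L.bracket (L.e (N v)) (L.bracket w u))
      + N (L.bracket (L.e w) (L.bracket u (N v))) = 0 := by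
    simpa [map_add] using congrArg N (L.jacobi u (N v) w)
  have h6 : N (L.bracket (L.e u) (L.bracket v (N w)))
      + N (L.bracket (L.e v) (L.bracket (N w) u))
      + N (L.bracket (L.e (N w)) (L.bracket u v)) = 0 := by
    simpa [map_add] using congrArg N (L.jacobi u v (N w))
  have h7 : N (N (L.bracket (L.e u) (L.bracket v w)))
      + N (N (L.bracket (L.e v) (L.bracket w u)))
      + N (N (L.bracket (L.e w) (L.bracket u v))) = 0 := by
    simpa [map_add] using congrArg (fun x => N (N x)) (L.jacobi u v w)
  have main :
      (L.bracket (L.e (N u)) (L.bracket (N v) w)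
        + L.bracket (L.e (N u)) (L.bracket v (N w))
        + L.bracket (L.e u) (L.bracket (N v) (N w))
        - N (L.bracket (L.e (N u)) (L.bracket v w))
        - N (L.bracket (L.e u) (L.bracket (N v) w))
        - N (L.bracket (L.e u) (L.bracket v (N w)))
        + N (N (L.bracket (L.e u) (L.bracket v w))))
      + (L.bracket (L.e (N v)) (L.bracket (N w) u)
        + L.bracket (L.e (N v)) (L.bracket w (N u))
        + L.bracket (L.e v) (L.bracket (N w) (N u))
        - N (L.bracket (L.e (N v)) (L.bracket w u))
        - N (L.bracket (L.e v) (L.bracket (N w) u))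
        - N (L.bracket (L.e v) (L.bracket w (N u)))
        + N (N (L.bracket (L.e v) (L.bracket w u))))
      + (L.bracket (L.e (N w)) (L.bracket (N u) v)
        + L.bracket (L.e (N w)) (L.bracket u (N v))
        + L.bracket (L.e w) (L.bracket (N u) (N v))
        - N (L.bracket (L.e (N w)) (L.bracket u v))
        - N (L.bracket (L.e w) (L.bracket (N u) v))
        - N (L.bracket (L.e w) (L.bracket u (N v)))
        + N (N (L.bracket (L.e w) (L.bracket u v))))
      =
      (L.bracket (L.e (N u)) (L.bracket (N v) w)
        + L.bracket (L.e (N v)) (L.bracket w (N u))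
        + L.bracket (L.e w) (L.bracket (N u) (N v)))
      + (L.bracket (L.e (N u)) (L.bracket v (N w))
        + L.bracket (L.e v) (L.bracket (N w) (N u))
        + L.bracket (L.e (N w)) (L.bracket (N u) v))
      + (L.bracket (L.e u) (L.bracket (N v) (N w))
        + L.bracket (L.e (N v)) (L.bracket (N w) u)
        + L.bracket (L.e (N w)) (L.bracket u (N v)))
      - (N (L.bracket (L.e (N u)) (L.bracket v w))
        + N (L.bracket (L.e v) (L.bracket w (N u)))
        + N (L.bracket (L.e w) (L.bracket (N u) v)))
      - (N (L.bracket (L.e u) (L.bracket (N v) w))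
        + N (L.bracket (L.e (N v)) (L.bracket w u))
        + N (L.bracket (L.e w) (L.bracket u (N v))))
      - (N (L.bracket (L.e u) (L.bracket v (N w)))
        + N (L.bracket (L.e v) (L.bracket (N w) u))
        + N (L.bracket (L.e (N w)) (L.bracket u v)))
      + (N (N (L.bracket (L.e u) (L.bracket v w)))
        + N (N (L.bracket (L.e v) (L.bracket w u)))
        + N (N (L.bracket (L.e w) (L.bracket u v)))) := by
    abel
  rw [main, L.jacobi (N u) (N v) w, L.jacobi (N u) v (N w), L.jacobi u (N v) (N w),
     h4, h5, h6, h7]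
  simp
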